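/- Let ε ∈ Sym₂(ℝ²), ϑ ∈ ℝ², and suppose h(ε,ϑ) := sup_{|τ|≤1, ψ∈ℝ} (ε:(τ⊗τ) + ψ·(ϑ·τ))/(1+ψ²) satisfies h(ε,ϑ) = 1. Set z := (1/2)ϑ and G := I + z⊗z. Then γ_{z,+}(ε + z ⊗ₛ ϑ) = 1, where γ_{z,+}(ξ) := sup{ξ:(τ⊗τ) : τ ∈ ℝ², G:(τ⊗τ) ≤ 1} and z ⊗ₛ ϑ = (z⊗ϑ + ϑ⊗z)/2. -/

import Mathlib

/-!
With `t = ϑ·τ/2`, rescaling a competitor `τ` of `γ` by `c = (1 - t²)^(-1/2)` and taking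
`ψ = c t` gives a competitor of `h` with the same value, so `γ ≤ h = 1`. Conversely, rescaling
`τ` with `|τ| ≤ 1` by `(1 + t²)^(-1/2)` gives a competitor of `γ`; completing the square in `ϑ·τ`
then shows that `γ < 1` would force `h ≤ max γ (1/(2-γ)) < 1`.
-/

open Matrix

/-- Frobenius inner product of 2×2 matrices. -/
def frob2 (A B : Matrix (Fin 2) (Fin 2) ℝ) : ℝ := ∑ i, ∑ j, A i j * B i j

namespace Matrix

variable {n R : Type*} [Fintype n] [CommSemiring R]

theorem smul_dotProduct_mulVec_smul (A : Matrix n n R) (c : R) (τ : n → R) :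
    (c • τ) ⬝ᵥ A *ᵥ (c • τ) = c ^ 2 * (τ ⬝ᵥ A *ᵥ τ) := by
  simp only [mulVec_smul, dotProduct_smul, smul_dotProduct, smul_eq_mul]
  ring

theorem dotProduct_vecMulVec_mulVec (u v τ : n → R) :
    τ ⬝ᵥ vecMulVec u v *ᵥ τ = (u ⬝ᵥ τ) * (v ⬝ᵥ τ) := by
  rw [vecMulVec_mulVec, op_smul_eq_smul, dotProduct_smul, smul_eq_mul, dotProduct_comm τ u,
    mul_comm]

end Matrix

theorem frob2_vecMulVec_self (A : Matrix (Fin 2) (Fin 2) ℝ) (τ : Fin 2 → ℝ) :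
    frob2 A (vecMulVec τ τ) = τ ⬝ᵥ A *ᵥ τ := by
  simp only [frob2, vecMulVec_apply, dotProduct, mulVec, Fin.sum_univ_two]
  ring

theorem add_mul_div_one_add_sq_le_max {q ℓ ψ γ : ℝ} (hγ : γ < 2)
    (hq : (q + ℓ ^ 2 / 2) / (1 + (ℓ / 2) ^ 2) ≤ γ) :
    (q + ψ * ℓ) / (1 + ψ ^ 2) ≤ max γ (1 / (2 - γ)) := by
  rw [div_le_iff₀ (by positivity)] at hq ⊢
  have h2γ : 0 < 2 - γ := by linarith
  have hψ : ψ * ℓ ≤ (2 - γ) * (ℓ / 2) ^ 2 + ψ ^ 2 / (2 - γ) := by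
    have hsquare : (2 - γ) * (ℓ / 2) ^ 2 + ψ ^ 2 / (2 - γ) - ψ * ℓ
        = ((2 - γ) * (ℓ / 2) - ψ) ^ 2 / (2 - γ) := by
      field_simp
      ring
    linarith [div_nonneg (sq_nonneg ((2 - γ) * (ℓ / 2) - ψ)) h2γ.le]
  have hγ_le : γ ≤ max γ (1 / (2 - γ)) := le_max_left _ _
  have hψ_le : ψ ^ 2 / (2 - γ) ≤ max γ (1 / (2 - γ)) * ψ ^ 2 := by
    rw [div_eq_mul_one_div, mul_comm]
    gcongr
    exact le_max_right _ _
  linarith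

section StrainValues

variable {n : Type*} [Fintype n] (ε : Matrix n n ℝ) (ϑ : n → ℝ)

/-- The quotients whose supremum is `h(ε, ϑ)`. -/
def relaxedStrainValues : Set ℝ :=
  {x | ∃ τ : n → ℝ, ∃ ψ : ℝ, τ ⬝ᵥ τ ≤ 1 ∧ x = (τ ⬝ᵥ ε *ᵥ τ + ψ * (ϑ ⬝ᵥ τ)) / (1 + ψ ^ 2)}

/-- The values `(ε + z ⊗ₛ ϑ) : (τ ⊗ τ)` with `G : (τ ⊗ τ) ≤ 1`, for `z = ϑ/2` and `G = I + z ⊗ z`,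
whose supremum is `γ_{z,+}(ε + z ⊗ₛ ϑ)`. -/
def intrinsicStrainValues : Set ℝ :=
  {y | ∃ τ : n → ℝ, τ ⬝ᵥ τ + (ϑ ⬝ᵥ τ / 2) ^ 2 ≤ 1 ∧ y = τ ⬝ᵥ ε *ᵥ τ + (ϑ ⬝ᵥ τ) ^ 2 / 2}

theorem zero_mem_intrinsicStrainValues : (0 : ℝ) ∈ intrinsicStrainValues ε ϑ :=
  ⟨0, by simp, by simp⟩

theorem intrinsicStrainValues_subset_relaxedStrainValues :
    intrinsicStrainValues ε ϑ ⊆ relaxedStrainValues ε ϑ := by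
  rintro _ ⟨τ, hτ, rfl⟩
  obtain ⟨t, hℓ⟩ : ∃ t, ϑ ⬝ᵥ τ = 2 * t := ⟨ϑ ⬝ᵥ τ / 2, by ring⟩
  rw [hℓ, mul_div_cancel_left₀ t two_ne_zero] at hτ
  have hτ_nonneg : 0 ≤ τ ⬝ᵥ τ := Finset.sum_nonneg fun i _ => mul_self_nonneg (τ i)
  have ht : t ^ 2 < 1 := by
    by_contra! h
    have hτ0 : τ = 0 := dotProduct_self_eq_zero.mp (by linarith)
    have ht0 : t = 0 := by simp only [hτ0, dotProduct_zero] at hℓ; linarith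
    norm_num [ht0] at h
  obtain ⟨c, hc⟩ : ∃ c : ℝ, c ^ 2 * (1 - t ^ 2) = 1 := ⟨(√(1 - t ^ 2))⁻¹, by
    rw [inv_pow, Real.sq_sqrt (by linarith), inv_mul_cancel₀ (by linarith)]⟩
  refine ⟨c • τ, c * t, ?_, ?_⟩
  · simp only [dotProduct_smul, smul_dotProduct, smul_eq_mul]
    nlinarith [sq_nonneg c]
  · simp only [smul_dotProduct_mulVec_smul, dotProduct_smul, smul_eq_mul, hℓ]
    rw [eq_div_iff (by positivity)]
    linear_combination (-(τ ⬝ᵥ ε *ᵥ τ) - 2 * t ^ 2) * hc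

theorem mem_intrinsicStrainValues_of_dotProduct_self_le_one {τ : n → ℝ} (hτ : τ ⬝ᵥ τ ≤ 1) :
    (τ ⬝ᵥ ε *ᵥ τ + (ϑ ⬝ᵥ τ) ^ 2 / 2) / (1 + (ϑ ⬝ᵥ τ / 2) ^ 2) ∈ intrinsicStrainValues ε ϑ := by
  obtain ⟨t, hℓ⟩ : ∃ t, ϑ ⬝ᵥ τ = 2 * t := ⟨ϑ ⬝ᵥ τ / 2, by ring⟩
  obtain ⟨r, hr⟩ : ∃ r : ℝ, r ^ 2 * (1 + t ^ 2) = 1 := ⟨(√(1 + t ^ 2))⁻¹, by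
    rw [inv_pow, Real.sq_sqrt (by positivity), inv_mul_cancel₀ (by positivity)]⟩
  refine ⟨r • τ, ?_, ?_⟩
  · simp only [dotProduct_smul, smul_dotProduct, smul_eq_mul, hℓ]
    nlinarith [sq_nonneg r]
  · simp only [smul_dotProduct_mulVec_smul, dotProduct_smul, smul_eq_mul, hℓ]
    rw [div_eq_iff (by positivity)]
    linear_combination (-(τ ⬝ᵥ ε *ᵥ τ) - 2 * t ^ 2) * hr

end StrainValues

theorem sSup_intrinsicStrainValues_eq_one {n : Type*} [Fintype n] {ε : Matrix n n ℝ}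
    {ϑ : n → ℝ} (hh : sSup (relaxedStrainValues ε ϑ) = 1) :
    sSup (intrinsicStrainValues ε ϑ) = 1 := by
  have hsub := intrinsicStrainValues_subset_relaxedStrainValues ε ϑ
  have hzero := zero_mem_intrinsicStrainValues ε ϑ
  have hbdd : BddAbove (relaxedStrainValues ε ϑ) := by
    by_contra h
    rw [Real.sSup_of_not_bddAbove h] at hh
    exact zero_ne_one hh
  refine le_antisymm (csSup_le ⟨0, hzero⟩ fun y hy => hh ▸ le_csSup hbdd (hsub hy)) ?_
  by_contra! hγ
  set γ := sSup (intrinsicStrainValues ε ϑ)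
  have hγ_nonneg : 0 ≤ γ := le_csSup (hbdd.mono hsub) hzero
  have hmax : max γ (1 / (2 - γ)) < 1 :=
    max_lt hγ (by rw [div_lt_one (by linarith)]; linarith)
  have hle : sSup (relaxedStrainValues ε ϑ) ≤ max γ (1 / (2 - γ)) := by
    refine csSup_le ⟨0, hsub hzero⟩ ?_
    rintro _ ⟨τ, ψ, hτ, rfl⟩
    exact add_mul_div_one_add_sq_le_max (by linarith) (le_csSup (hbdd.mono hsub)
      (mem_intrinsicStrainValues_of_dotProduct_self_le_one ε ϑ hτ))
  linarith

theorem stmt19_general (ε : Matrix (Fin 2) (Fin 2) ℝ) (ϑ : Fin 2 → ℝ)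
    (hh : sSup {x : ℝ | ∃ τ : Fin 2 → ℝ, ∃ ψ : ℝ, (∑ i, τ i ^ 2) ≤ 1 ∧
        x = (frob2 ε (Matrix.vecMulVec τ τ) + ψ * (ϑ ⬝ᵥ τ)) / (1 + ψ ^ 2)} = 1) :
    sSup {y : ℝ | ∃ τ : Fin 2 → ℝ,
        frob2 ((1 : Matrix (Fin 2) (Fin 2) ℝ) +
            Matrix.vecMulVec ((1/2 : ℝ) • ϑ) ((1/2 : ℝ) • ϑ))
          (Matrix.vecMulVec τ τ) ≤ 1 ∧
        y = frob2 (ε + (1/2 : ℝ) •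
            (Matrix.vecMulVec ((1/2 : ℝ) • ϑ) ϑ +
              Matrix.vecMulVec ϑ ((1/2 : ℝ) • ϑ)))
          (Matrix.vecMulVec τ τ)} = 1 := by
  have hG (τ : Fin 2 → ℝ) : frob2 (1 + vecMulVec ((1/2 : ℝ) • ϑ) ((1/2 : ℝ) • ϑ))
      (vecMulVec τ τ) = τ ⬝ᵥ τ + (ϑ ⬝ᵥ τ / 2) ^ 2 := by
    rw [frob2_vecMulVec_self, add_mulVec, one_mulVec, dotProduct_add,
      dotProduct_vecMulVec_mulVec, smul_dotProduct, smul_eq_mul]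
    ring
  have hstrain (τ : Fin 2 → ℝ) : frob2 (ε + (1/2 : ℝ) • (vecMulVec ((1/2 : ℝ) • ϑ) ϑ +
      vecMulVec ϑ ((1/2 : ℝ) • ϑ))) (vecMulVec τ τ) = τ ⬝ᵥ ε *ᵥ τ + (ϑ ⬝ᵥ τ) ^ 2 / 2 := by
    rw [frob2_vecMulVec_self, add_mulVec, smul_mulVec, add_mulVec, dotProduct_add,
      dotProduct_smul, dotProduct_add, dotProduct_vecMulVec_mulVec, dotProduct_vecMulVec_mulVec,
      smul_dotProduct, smul_eq_mul, smul_eq_mul]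
    ring
  have hnorm (τ : Fin 2 → ℝ) : ∑ i, τ i ^ 2 = τ ⬝ᵥ τ := by simp only [dotProduct, sq]
  simp only [hG, hstrain, hnorm, frob2_vecMulVec_self] at hh ⊢
  exact sSup_intrinsicStrainValues_eq_one hh

/-- If h(ε,ϑ) = 1 then, with z = (1/2)ϑ and G = I + z⊗z,
    γ_{z,+}(ε + z ⊗ₛ ϑ) = sup{(ε + z⊗ₛϑ):(τ⊗τ) : G:(τ⊗τ) ≤ 1} = 1. -/
theorem stmt19 (ε : Matrix (Fin 2) (Fin 2) ℝ) (ϑ : Fin 2 → ℝ) (hε : ε.IsHermitian)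
    (hh : sSup {x : ℝ | ∃ τ : Fin 2 → ℝ, ∃ ψ : ℝ, (∑ i, τ i ^ 2) ≤ 1 ∧
        x = (frob2 ε (Matrix.vecMulVec τ τ) + ψ * (ϑ ⬝ᵥ τ)) / (1 + ψ ^ 2)} = 1) :
    sSup {y : ℝ | ∃ τ : Fin 2 → ℝ,
        frob2 ((1 : Matrix (Fin 2) (Fin 2) ℝ) +
            Matrix.vecMulVec ((1/2 : ℝ) • ϑ) ((1/2 : ℝ) • ϑ))
          (Matrix.vecMulVec τ τ) ≤ 1 ∧
        y = frob2 (ε + (1/2 : ℝ) •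
            (Matrix.vecMulVec ((1/2 : ℝ) • ϑ) ϑ +
              Matrix.vecMulVec ϑ ((1/2 : ℝ) • ϑ)))
          (Matrix.vecMulVec τ τ)} = 1 :=
  stmt19_general ε ϑ hh
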